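/- arXiv:1710.05235 — 3 statements merged into one kernel-verified Lean document; each statement's English description precedes it below -/
import Mathlib

section
/- Let ψ : [1,b) → [1,∞) be continuous with inf ψ = 1, and define v(p) = p ln ψ(p). If a random variable f satisfies |f|_p ≤ ‖f‖·ψ(p) for all p ∈ [1,b) with ‖f‖ > 0, then its tail function satisfies T_f(y) ≤ exp(−v*(ln(y/‖f‖))) for all y ≥ e·‖f‖, where v*(u) = sup_{p∈[1,b)} (pu − v(p)) is the Young–Fenchel transform of v and T_f(y) = max(P(f ≥ y), P(f ≤ −y)). -/
open MeasureTheory Real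

/-- if `|f|_p ≤ N·ψ(p)` for all `p ∈ [1,b)`, then
`T_f(y) ≤ exp(−v*(ln(y/N)))` for `y ≥ e·N`, where `v(p) = p ln ψ(p)` and
`v*` is the Young–Fenchel transform. (Stated equivalently: the tail is bounded
by `exp(−(p·ln(y/N) − v(p)))` for every admissible `p`, i.e. by
`inf_p exp(−(p·u − v(p))) = exp(−v*(u))`, `u = ln(y/N)`.) -/
theorem stmt_10
    {Ω : Type*} [MeasurableSpace Ω] (P : Measure Ω) [IsProbabilityMeasure P]
    (b : EReal) (hb : 1 < b)
    (ψ : ℝ → ℝ) (hψcont : ContinuousOn ψ {p : ℝ | 1 ≤ p ∧ (p : EReal) < b})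
    (hψ1 : ∀ p : ℝ, 1 ≤ p → (p : EReal) < b → 1 ≤ ψ p)
    (f : Ω → ℝ) (hfm : Measurable f)
    (N : ℝ) (hN : 0 < N)
    (hint : ∀ p : ℝ, 1 ≤ p → (p : EReal) < b → Integrable (fun ω => |f ω| ^ p) P)
    (hmom : ∀ p : ℝ, 1 ≤ p → (p : EReal) < b →
      (∫ ω, |f ω| ^ p ∂P) ^ (1/p) ≤ N * ψ p) :
    ∀ y : ℝ, Real.exp 1 * N ≤ y →
      ∀ p : ℝ, 1 ≤ p → (p : EReal) < b →
        max ((P {ω | y ≤ f ω}).toReal) ((P {ω | f ω ≤ -y}).toReal)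
          ≤ Real.exp (-(p * Real.log (y / N) - p * Real.log (ψ p))) := by
  intro y hy p hp1 hpb
  have hp0 : 0 < p := lt_of_lt_of_le one_pos hp1
  have hy0 : 0 < y := lt_of_lt_of_le (mul_pos (Real.exp_pos 1) hN) hy
  have hψp : (0:ℝ) < ψ p := lt_of_lt_of_le one_pos (hψ1 p hp1 hpb)
  set I := ∫ ω, |f ω| ^ p ∂P with hI
  have hInn : 0 ≤ I := integral_nonneg fun ω => Real.rpow_nonneg (abs_nonneg _) _
  -- I ≤ (N * ψ p) ^ p
  have hIle : I ≤ (N * ψ p) ^ p := by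
    have h1 := hmom p hp1 hpb
    have h2 : (I ^ (1/p)) ^ p ≤ (N * ψ p) ^ p :=
      Real.rpow_le_rpow (Real.rpow_nonneg hInn _) h1 hp0.le
    rwa [← Real.rpow_mul hInn, one_div, inv_mul_cancel₀ hp0.ne', Real.rpow_one] at h2
  -- Markov bound for a set contained in {|f| ≥ y}
  have markov : ∀ s : Set Ω, s ⊆ {ω | y ^ p ≤ |f ω| ^ p} → MeasurableSet s →
      (P s).toReal ≤ I / y ^ p := by
    intro s hsub hsm
    have hmono : P s ≤ P {ω | y ^ p ≤ |f ω| ^ p} := measure_mono hsub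
    have hmark := mul_meas_ge_le_integral_of_nonneg
      (f := fun ω => |f ω| ^ p) (μ := P)
      (Filter.Eventually.of_forall fun ω => Real.rpow_nonneg (abs_nonneg _) _)
      (hint p hp1 hpb) (y ^ p)
    have hfin1 : P s ≠ ⊤ := measure_ne_top _ _
    have hfin2 : P {ω | y ^ p ≤ |f ω| ^ p} ≠ ⊤ := measure_ne_top _ _
    have htoReal : (P s).toReal ≤ (P {ω | y ^ p ≤ |f ω| ^ p}).toReal :=
      ENNReal.toReal_mono hfin2 hmono
    have hyp0 : (0:ℝ) < y ^ p := Real.rpow_pos_of_pos hy0 p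
    calc (P s).toReal ≤ (P {ω | y ^ p ≤ |f ω| ^ p}).toReal := htoReal
      _ ≤ I / y ^ p := by
          rw [le_div_iff₀ hyp0]
          calc (P {ω | y ^ p ≤ |f ω| ^ p}).toReal * y ^ p
              = y ^ p * (P {ω | y ^ p ≤ |f ω| ^ p}).toReal := mul_comm _ _
            _ ≤ I := hmark
  -- subsets
  have habs : ∀ ω : Ω, y ≤ |f ω| → y ^ p ≤ |f ω| ^ p := fun ω h =>
    Real.rpow_le_rpow hy0.le h hp0.le
  have hs1 : {ω | y ≤ f ω} ⊆ {ω | y ^ p ≤ |f ω| ^ p} := fun ω h =>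
    habs ω (le_trans h (le_abs_self _))
  have hs2 : {ω | f ω ≤ -y} ⊆ {ω | y ^ p ≤ |f ω| ^ p} := fun ω h =>
    habs ω (by
      simp only [Set.mem_setOf_eq] at h
      have h1 : y ≤ -f ω := by linarith
      exact h1.trans (neg_le_abs _))
  have hm1 : MeasurableSet {ω | y ≤ f ω} := measurableSet_le measurable_const hfm
  have hm2 : MeasurableSet {ω | f ω ≤ -y} := measurableSet_le hfm measurable_const
  have hmax : max ((P {ω | y ≤ f ω}).toReal) ((P {ω | f ω ≤ -y}).toReal)
      ≤ I / y ^ p :=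
    max_le (markov _ hs1 hm1) (markov _ hs2 hm2)
  -- identify RHS
  have hrhs : Real.exp (-(p * Real.log (y / N) - p * Real.log (ψ p)))
      = (N * ψ p) ^ p / y ^ p := by
    have hyN : (0:ℝ) < y / N := div_pos hy0 hN
    have hNψ : (0:ℝ) < N * ψ p := mul_pos hN hψp
    rw [Real.rpow_def_of_pos hNψ, Real.rpow_def_of_pos hy0, ← Real.exp_sub]
    congr 1
    rw [Real.log_mul hN.ne' hψp.ne', Real.log_div hy0.ne' hN.ne']
    ring
  rw [hrhs]
  refine hmax.trans ?_
  gcongr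
end

section
/- Let b > 1, γ > −1, and suppose a random variable f has tail T_f(y) ≤ y^{−b} (ln y)^γ for all y ≥ e. Then there is a constant C = C(b,γ) such that for all p ∈ [1, b), |f|_p ≤ C · (b − p)^{−(γ+1)/b}. -/
/-! The layer-cake formula gives `E|f|^p = p ∫₀^∞ y^{p-1} P(|f| ≥ y) dy`. Bounding the tail by
`1` below `e` and by `2 y^{-b} (ln y)^γ` above, the substitution `y = e^u` turns the second part
into at most `∫₀^∞ u^γ e^{-(b-p)u} du = Γ(γ+1) (b-p)^{-(γ+1)}`, so `E|f|^p ≤ K (b-p)^{-(γ+1)}`.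
Taking `p`-th roots costs only a bounded factor, because
`(b-p)^{-(γ+1)(1/p - 1/b)} = ((b-p)^{-(b-p)})^{(γ+1)/(pb)} ≤ e^{γ+1}`. -/

open MeasureTheory Real Set

lemma lintegral_Ioi_exp_one_rpow_mul_log_rpow_le {s γ : ℝ} (hs : 0 < s) (hγ : -1 < γ) :
    ∫⁻ y in Ioi (exp 1), ENNReal.ofReal (y ^ (-1 - s) * log y ^ γ)
      ≤ ENNReal.ofReal (s ^ (-(γ + 1)) * Gamma (γ + 1)) := by
  have hsubst : ∫⁻ y in Ioi (exp 1), ENNReal.ofReal (y ^ (-1 - s) * log y ^ γ)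
      = ∫⁻ u in Ioi 1, ENNReal.ofReal (u ^ γ * exp (-s * u)) := by
    rw [← image_exp_Ioi, lintegral_image_eq_lintegral_abs_deriv_mul measurableSet_Ioi
      (fun u _ => (hasDerivAt_exp u).hasDerivWithinAt) exp_injective.injOn]
    refine setLIntegral_congr_fun measurableSet_Ioi fun u _ => ?_
    rw [abs_of_pos (exp_pos u), ← ENNReal.ofReal_mul (exp_pos u).le, log_exp, ← exp_mul,
      ← mul_assoc, ← exp_add, mul_comm]
    ring_nf
  have hgamma := integral_rpow_mul_exp_neg_mul_rpow zero_lt_one hγ hs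
  have hint := integrableOn_rpow_mul_exp_neg_mul_rpow hγ zero_lt_one hs
  simp only [rpow_one, div_one, mul_one] at hgamma hint
  calc _ = ∫⁻ u in Ioi 1, ENNReal.ofReal (u ^ γ * exp (-s * u)) := hsubst
    _ ≤ ∫⁻ u in Ioi 0, ENNReal.ofReal (u ^ γ * exp (-s * u)) :=
      lintegral_mono_set (Ioi_subset_Ioi zero_le_one)
    _ = _ := by
      rw [← hgamma, ofReal_integral_eq_lintegral_ofReal hint]
      filter_upwards [self_mem_ae_restrict measurableSet_Ioi] with u hu
      exact mul_nonneg (rpow_nonneg (le_of_lt hu) _) (exp_pos _).le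

lemma lintegral_rpow_le_add_lintegral_Ioi_meas_le {Ω : Type*} [MeasurableSpace Ω]
    (P : Measure Ω) [IsProbabilityMeasure P] {X : Ω → ℝ} (hX0 : 0 ≤ᵐ[P] X)
    (hX : AEMeasurable X P) {p a : ℝ} (hp : 0 < p) (ha : 0 ≤ a) :
    ∫⁻ ω, ENNReal.ofReal (X ω ^ p) ∂P ≤ ENNReal.ofReal (a ^ p) +
      ENNReal.ofReal p * ∫⁻ t in Ioi a, P {ω | t ≤ X ω} * ENNReal.ofReal (t ^ (p - 1)) := by
  rw [lintegral_rpow_eq_lintegral_meas_le_mul P hX0 hX hp, ← Ioc_union_Ioi_eq_Ioi ha,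
    lintegral_union measurableSet_Ioi Ioc_disjoint_Ioi_same, mul_add]
  gcongr
  have hint : IntegrableOn (fun t : ℝ => t ^ (p - 1)) (Ioc 0 a) :=
    (intervalIntegral.intervalIntegrable_rpow' (by linarith)).1
  calc ENNReal.ofReal p * ∫⁻ t in Ioc 0 a, P {ω | t ≤ X ω} * ENNReal.ofReal (t ^ (p - 1))
      ≤ ENNReal.ofReal p * ∫⁻ t in Ioc 0 a, ENNReal.ofReal (t ^ (p - 1)) := by
        gcongr with t
        exact mul_le_of_le_one_left' prob_le_one
    _ = ENNReal.ofReal (p * (a ^ p / p)) := by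
        rw [← ofReal_integral_eq_lintegral_ofReal hint, ← intervalIntegral.integral_of_le ha,
          integral_rpow (Or.inl (by linarith)), ← ENNReal.ofReal_mul hp.le]
        · simp [zero_rpow hp.ne']
        · filter_upwards [self_mem_ae_restrict measurableSet_Ioc] with t ht
          exact rpow_nonneg ht.1.le _
    _ = ENNReal.ofReal (a ^ p) := by rw [mul_div_cancel₀ _ hp.ne']

lemma measure_le_abs_le_add {Ω : Type*} [MeasurableSpace Ω] (P : Measure Ω) (f : Ω → ℝ)
    (t : ℝ) : P {ω | t ≤ |f ω|} ≤ P {ω | t ≤ f ω} + P {ω | f ω ≤ -t} := by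
  refine (measure_mono fun ω hω => ?_).trans (measure_union_le _ _)
  rcases le_abs.mp (show t ≤ |f ω| from hω) with h | h
  · exact Or.inl h
  · exact Or.inr (le_neg.mp h)

lemma measure_le_abs_le_of_max_le {Ω : Type*} [MeasurableSpace Ω] (P : Measure Ω)
    [IsFiniteMeasure P] (f : Ω → ℝ) {t g : ℝ}
    (h : max (P {ω | t ≤ f ω}).toReal (P {ω | f ω ≤ -t}).toReal ≤ g) :
    P {ω | t ≤ |f ω|} ≤ ENNReal.ofReal (2 * g) := by
  have hg : 0 ≤ g := ENNReal.toReal_nonneg.trans ((le_max_left _ _).trans h)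
  rw [two_mul, ENNReal.ofReal_add hg hg]
  refine (measure_le_abs_le_add P f t).trans (add_le_add ?_ ?_) <;>
    refine (ENNReal.le_ofReal_iff_toReal_le (measure_ne_top _ _) hg).mpr (le_trans ?_ h)
  exacts [le_max_left _ _, le_max_right _ _]

lemma lintegral_rpow_abs_le_of_tail {Ω : Type*} [MeasurableSpace Ω] (P : Measure Ω)
    [IsProbabilityMeasure P] {f : Ω → ℝ} (hf : Measurable f) {b γ : ℝ} (hγ : -1 < γ)
    (htail : ∀ y : ℝ, exp 1 ≤ y →
      max (P {ω | y ≤ f ω}).toReal (P {ω | f ω ≤ -y}).toReal ≤ y ^ (-b) * log y ^ γ)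
    {p : ℝ} (hp : 0 < p) (hpb : p < b) :
    ∫⁻ ω, ENNReal.ofReal (|f ω| ^ p) ∂P
      ≤ ENNReal.ofReal (exp p + p * (2 * ((b - p) ^ (-(γ + 1)) * Gamma (γ + 1)))) := by
  have hpoint : ∀ t ∈ Ioi (exp 1), P {ω | t ≤ |f ω|} * ENNReal.ofReal (t ^ (p - 1))
      ≤ ENNReal.ofReal 2 * ENNReal.ofReal (t ^ (-1 - (b - p)) * log t ^ γ) := by
    intro t ht
    have ht0 : 0 < t := (exp_pos 1).trans ht
    have hlog : 0 ≤ log t := log_nonneg ((one_lt_exp_iff.mpr one_pos).trans ht).le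
    calc P {ω | t ≤ |f ω|} * ENNReal.ofReal (t ^ (p - 1))
        ≤ ENNReal.ofReal (2 * (t ^ (-b) * log t ^ γ)) * ENNReal.ofReal (t ^ (p - 1)) := by
          gcongr
          exact measure_le_abs_le_of_max_le P f (htail t ht.le)
      _ = _ := by
          rw [← ENNReal.ofReal_mul zero_le_two, ← ENNReal.ofReal_mul (by positivity)]
          congr 1
          rw [show -1 - (b - p) = -b + (p - 1) by ring, rpow_add ht0]
          ring
  calc ∫⁻ ω, ENNReal.ofReal (|f ω| ^ p) ∂P
      ≤ ENNReal.ofReal (exp 1 ^ p) + ENNReal.ofReal p *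
          ∫⁻ t in Ioi (exp 1), P {ω | t ≤ |f ω|} * ENNReal.ofReal (t ^ (p - 1)) :=
        lintegral_rpow_le_add_lintegral_Ioi_meas_le P (ae_of_all _ fun _ => abs_nonneg _)
          hf.abs.aemeasurable hp (exp_pos 1).le
    _ ≤ ENNReal.ofReal (exp 1 ^ p) + ENNReal.ofReal p * (ENNReal.ofReal 2 *
          ∫⁻ t in Ioi (exp 1), ENNReal.ofReal (t ^ (-1 - (b - p)) * log t ^ γ)) := by
        rw [← lintegral_const_mul' (ENNReal.ofReal 2) _ ENNReal.ofReal_ne_top]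
        gcongr ENNReal.ofReal _ + ENNReal.ofReal p * ?_
        exact setLIntegral_mono' measurableSet_Ioi hpoint
    _ ≤ ENNReal.ofReal (exp 1 ^ p) + ENNReal.ofReal p * (ENNReal.ofReal 2 *
          ENNReal.ofReal ((b - p) ^ (-(γ + 1)) * Gamma (γ + 1))) := by
        gcongr
        exact lintegral_Ioi_exp_one_rpow_mul_log_rpow_le (sub_pos.mpr hpb) hγ
    _ = _ := by
        have hΓ := Gamma_pos_of_pos (neg_lt_iff_pos_add.mp hγ)
        rw [← ENNReal.ofReal_mul zero_le_two, ← ENNReal.ofReal_mul hp.le,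
          ← ENNReal.ofReal_add (by positivity) (by positivity), exp_one_rpow]

lemma integral_rpow_abs_le_of_tail {Ω : Type*} [MeasurableSpace Ω] (P : Measure Ω)
    [IsProbabilityMeasure P] {f : Ω → ℝ} (hf : Measurable f) {b γ : ℝ} (hγ : -1 < γ)
    (htail : ∀ y : ℝ, exp 1 ≤ y →
      max (P {ω | y ≤ f ω}).toReal (P {ω | f ω ≤ -y}).toReal ≤ y ^ (-b) * log y ^ γ)
    {p : ℝ} (hp : 0 < p) (hpb : p < b) :
    ∫ ω, |f ω| ^ p ∂P ≤ exp p + p * (2 * ((b - p) ^ (-(γ + 1)) * Gamma (γ + 1))) := by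
  have hΓ := Gamma_pos_of_pos (neg_lt_iff_pos_add.mp hγ)
  rw [integral_eq_lintegral_of_nonneg_ae (ae_of_all _ fun _ => by positivity)
    (hf.abs.pow_const p).aestronglyMeasurable]
  exact ENNReal.toReal_le_of_le_ofReal (by positivity)
    (lintegral_rpow_abs_le_of_tail P hf hγ htail hp hpb)

lemma rpow_neg_mul_self_le_exp {x a : ℝ} (hx : 0 < x) (ha : 0 ≤ a) :
    x ^ (-(a * x)) ≤ exp a := by
  rw [rpow_def_of_pos hx, exp_le_exp]
  have := negMulLog_le_one_sub_self hx.le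
  rw [negMulLog] at this
  nlinarith

lemma rpow_neg_div_le_exp_mul_rpow_neg_div {b c p : ℝ} (hp : 1 ≤ p) (hpb : p < b)
    (hc : 0 ≤ c) :
    (b - p) ^ (-c / p) ≤ exp c * (b - p) ^ (-c / b) := by
  have hs : 0 < b - p := sub_pos.mpr hpb
  have hpb0 : 1 ≤ p * b := by nlinarith
  have hcpb : c / (p * b) ≤ c := div_le_self hc hpb0
  calc (b - p) ^ (-c / p) = (b - p) ^ (-(c / (p * b) * (b - p))) * (b - p) ^ (-c / b) := by
        rw [← rpow_add hs]
        have : p ≠ 0 := by linarith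
        have : b ≠ 0 := by linarith
        congr 1
        field_simp
        ring
    _ ≤ exp c * (b - p) ^ (-c / b) := by
        gcongr
        exact (rpow_neg_mul_self_le_exp hs (div_nonneg hc (by linarith))).trans
          (exp_le_exp.mpr hcpb)

lemma rpow_one_div_le_mul_rpow_one_div {M K x p : ℝ} (hM : 0 ≤ M) (hMK : M ≤ K * x)
    (hK : 1 ≤ K) (hx : 0 ≤ x) (hp : 1 ≤ p) : M ^ (1 / p) ≤ K * x ^ (1 / p) := by
  have hp0 : 0 < p := by linarith
  calc M ^ (1 / p) ≤ (K * x) ^ (1 / p) := rpow_le_rpow hM hMK (by positivity)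
    _ = K ^ (1 / p) * x ^ (1 / p) := mul_rpow (by linarith) hx
    _ ≤ K ^ (1 : ℝ) * x ^ (1 / p) := by
        gcongr
        exact (div_le_one hp0).mpr hp
    _ = K * x ^ (1 / p) := by rw [rpow_one]

lemma exp_add_mul_rpow_neg_le {b c p G : ℝ} (hp : 1 ≤ p) (hpb : p < b) (hc : 0 ≤ c)
    (hG : 0 ≤ G) :
    exp p + p * (2 * ((b - p) ^ (-c) * G)) ≤
      (exp b * (b - 1) ^ c + 2 * b * G) * (b - p) ^ (-c) := by
  have hs : 0 < b - p := sub_pos.mpr hpb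
  have hratio : 1 ≤ (b - 1) ^ c * (b - p) ^ (-c) := by
    rw [rpow_neg hs.le, ← div_eq_mul_inv, ← div_rpow (by linarith) hs.le]
    exact one_le_rpow ((one_le_div hs).mpr (by linarith)) hc
  have hexp : exp p ≤ exp b * ((b - 1) ^ c * (b - p) ^ (-c)) :=
    (exp_le_exp.mpr hpb.le).trans (le_mul_of_one_le_right (exp_pos b).le hratio)
  have hlin : p * (2 * ((b - p) ^ (-c) * G)) ≤ b * (2 * ((b - p) ^ (-c) * G)) := by
    gcongr
  linarith

/-- a power-logarithmic tail `T_f(y) ≤ y^{−b}(ln y)^γ` (`y ≥ e`)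
implies the moment blow-up bound `|f|_p ≤ C(b,γ)·(b−p)^{−(γ+1)/b}` for
`p ∈ [1,b)`, with a constant depending only on `b, γ`. -/
theorem stmt_14 (b γ : ℝ) (hb : 1 < b) (hγ : -1 < γ) :
    ∃ C : ℝ, 0 < C ∧
      ∀ (Ω : Type) (_ : MeasurableSpace Ω) (P : Measure Ω),
        IsProbabilityMeasure P →
        ∀ (f : Ω → ℝ), Measurable f →
        (∀ y : ℝ, Real.exp 1 ≤ y →
          max ((P {ω | y ≤ f ω}).toReal) ((P {ω | f ω ≤ -y}).toReal)
            ≤ y ^ (-b) * (Real.log y) ^ γ) →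
        ∀ p : ℝ, 1 ≤ p → p < b →
          (∫ ω, |f ω| ^ p ∂P) ^ (1/p) ≤ C * (b - p) ^ (-(γ + 1) / b) := by
  have hΓ := Gamma_pos_of_pos (neg_lt_iff_pos_add.mp hγ)
  have hb1 : 0 ≤ (b - 1) ^ (γ + 1) := rpow_nonneg (by linarith) _
  set K := 1 + exp b * (b - 1) ^ (γ + 1) + 2 * b * Gamma (γ + 1)
  have hK : 1 ≤ K := by
    have := mul_nonneg (exp_pos b).le hb1
    have := mul_pos (mul_pos two_pos (by linarith : 0 < b)) hΓ
    linarith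
  refine ⟨K * exp (γ + 1), by positivity, ?_⟩
  intro Ω _ P _ f hf htail p hp hpb
  have hs : 0 < b - p := sub_pos.mpr hpb
  have hmoment : ∫ ω, |f ω| ^ p ∂P ≤ K * (b - p) ^ (-(γ + 1)) :=
    calc ∫ ω, |f ω| ^ p ∂P ≤ exp p + p * (2 * ((b - p) ^ (-(γ + 1)) * Gamma (γ + 1))) :=
          integral_rpow_abs_le_of_tail P hf hγ htail (by linarith) hpb
      _ ≤ (exp b * (b - 1) ^ (γ + 1) + 2 * b * Gamma (γ + 1)) * (b - p) ^ (-(γ + 1)) :=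
          exp_add_mul_rpow_neg_le hp hpb (by linarith) hΓ.le
      _ ≤ K * (b - p) ^ (-(γ + 1)) := by
          gcongr
          linarith
  calc (∫ ω, |f ω| ^ p ∂P) ^ (1 / p) ≤ K * ((b - p) ^ (-(γ + 1))) ^ (1 / p) :=
        rpow_one_div_le_mul_rpow_one_div (integral_nonneg fun _ => by positivity) hmoment hK
          (rpow_nonneg hs.le _) hp
    _ = K * (b - p) ^ (-(γ + 1) / p) := by rw [← rpow_mul hs.le, mul_one_div]
    _ ≤ K * (exp (γ + 1) * (b - p) ^ (-(γ + 1) / b)) := by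
        gcongr
        exact rpow_neg_div_le_exp_mul_rpow_neg_div hp hpb (by linarith)
    _ = K * exp (γ + 1) * (b - p) ^ (-(γ + 1) / b) := by ring
end

section
/- Conversely to the previous statement: if |f|_p ≤ (b−p)^{−(γ+1)/b} for all p ∈ [1,b), with b > 1 and γ > −1, then there are constants C₃, C₄ > 0 such that T_f(y) ≤ C₃ y^{−b} (ln y)^{γ+1} for all y ≥ C₄ e. -/
open MeasureTheory Real

/-- converse to Statement 14: if `|f|_p ≤ (b−p)^{−(γ+1)/b}` for
all `p ∈ [1,b)`, then `T_f(y) ≤ C₃ y^{−b} (ln y)^{γ+1}` for `y ≥ C₄·e`, with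
constants depending only on `b, γ`. -/
theorem stmt_15 (b γ : ℝ) (hb : 1 < b) (hγ : -1 < γ) :
    ∃ C₃ C₄ : ℝ, 0 < C₃ ∧ 0 < C₄ ∧
      ∀ (Ω : Type) (_ : MeasurableSpace Ω) (P : Measure Ω),
        IsProbabilityMeasure P →
        ∀ (f : Ω → ℝ), Measurable f →
        (∀ p : ℝ, 1 ≤ p → p < b → Integrable (fun ω => |f ω| ^ p) P ∧
          (∫ ω, |f ω| ^ p ∂P) ^ (1/p) ≤ (b - p) ^ (-(γ + 1) / b)) →
        ∀ y : ℝ, C₄ * Real.exp 1 ≤ y →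
          max ((P {ω | y ≤ f ω}).toReal) ((P {ω | f ω ≤ -y}).toReal)
            ≤ C₃ * y ^ (-b) * (Real.log y) ^ (γ + 1) := by
  set A := γ + 1 with hA
  clear_value A
  have hA0 : 0 < A := by rw [hA]; linarith
  have hb0 : 0 < b := by linarith
  have hbA0 : 0 < b * A := mul_pos hb0 hA0
  refine ⟨Real.exp (b * A) * (b * A) ^ (-A),
    Real.exp (b * A + b * A / (b - 1) + 1), ?_, Real.exp_pos _, ?_⟩
  · exact mul_pos (Real.exp_pos _) (Real.rpow_pos_of_pos hbA0 _)
  intro Ω _ P hP f hf hmom y hy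
  have hb1 : 0 < b - 1 := by linarith
  have hdiv0 : 0 < b * A / (b - 1) := div_pos hbA0 hb1
  -- basic facts about y and L = log y
  rw [← Real.exp_add] at hy
  have hy1 : 1 < y := by
    refine lt_of_lt_of_le ?_ hy
    have h0 : Real.exp 0 < Real.exp (b * A + b * A / (b - 1) + 1 + 1) :=
      Real.exp_lt_exp.2 (by linarith)
    simpa using h0
  have hy0 : 0 < y := by linarith
  set L := Real.log y with hL
  clear_value L
  have hLge : b * A + b * A / (b - 1) + 2 ≤ L := by
    have h1 := (Real.log_le_log_iff (Real.exp_pos _) hy0).2 hy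
    rw [Real.log_exp] at h1; rw [hL]; linarith
  have hL0 : 0 < L := by linarith
  -- the exponent p
  set p := b - b * A / L with hp
  clear_value p
  have hbp : b - p = b * A / L := by rw [hp]; ring
  have hbp0 : 0 < b - p := by rw [hbp]; exact div_pos hbA0 hL0
  have hpb : p < b := by linarith
  have hbA_le : b * A ≤ L := by linarith
  have hbp1 : b - p ≤ 1 := by
    rw [hbp, div_le_one hL0]; linarith
  have hp1 : 1 ≤ p := by
    have h2 : b * A ≤ (b - 1) * L := by
      calc b * A = b * A / (b - 1) * (b - 1) := by field_simp
        _ ≤ L * (b - 1) := by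
            apply mul_le_mul_of_nonneg_right _ hb1.le
            calc b * A / (b - 1) ≤ b * A + b * A / (b - 1) + 2 := by linarith
              _ ≤ L := hLge
        _ = (b - 1) * L := mul_comm _ _
    rw [hp, le_sub_iff_add_le, ← le_sub_iff_add_le', div_le_iff₀ hL0]
    linarith [h2]
  have hp0 : 0 < p := by linarith
  obtain ⟨hint, hnorm⟩ := hmom p hp1 hpb
  set I := ∫ ω, |f ω| ^ p ∂P with hI
  have hI0 : 0 ≤ I := integral_nonneg fun ω => Real.rpow_nonneg (abs_nonneg _) _
  -- `I ≤ (b - p) ^ (-A / b * p)`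
  have hIle : I ≤ (b - p) ^ (-A / b * p) := by
    calc I = (I ^ (1/p)) ^ p := by
          rw [← Real.rpow_mul hI0, one_div_mul_cancel (ne_of_gt hp0), Real.rpow_one]
      _ ≤ ((b - p) ^ (-A / b)) ^ p :=
          Real.rpow_le_rpow (Real.rpow_nonneg hI0 _) hnorm hp0.le
      _ = (b - p) ^ (-A / b * p) := by rw [← Real.rpow_mul hbp0.le]
  -- Markov's inequality for both tails
  have hyp0 : 0 < y ^ p := Real.rpow_pos_of_pos hy0 _
  have markov : ∀ S : Set Ω, S ⊆ {ω | y ^ p ≤ |f ω| ^ p} →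
      (P S).toReal ≤ (b - p) ^ (-A / b * p) * y ^ (-p) := by
    intro S hS
    have h1 : y ^ p * (P {ω | y ^ p ≤ |f ω| ^ p}).toReal ≤ I :=
      mul_meas_ge_le_integral_of_nonneg
        (ae_of_all _ fun ω => Real.rpow_nonneg (abs_nonneg _) _) hint _
    have h2 : (P S).toReal ≤ (P {ω | y ^ p ≤ |f ω| ^ p}).toReal :=
      ENNReal.toReal_mono (measure_ne_top _ _) (measure_mono hS)
    have h3 : (P S).toReal ≤ I / y ^ p := by
      rw [le_div_iff₀ hyp0]
      calc (P S).toReal * y ^ p ≤ (P {ω | y ^ p ≤ |f ω| ^ p}).toReal * y ^ p :=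
            mul_le_mul_of_nonneg_right h2 hyp0.le
        _ = y ^ p * (P {ω | y ^ p ≤ |f ω| ^ p}).toReal := mul_comm _ _
        _ ≤ I := h1
    calc (P S).toReal ≤ I / y ^ p := h3
      _ ≤ (b - p) ^ (-A / b * p) / y ^ p := by gcongr
      _ = (b - p) ^ (-A / b * p) * y ^ (-p) := by
          rw [Real.rpow_neg hy0.le, div_eq_mul_inv]
  -- final numeric bound
  have key : (b - p) ^ (-A / b * p) * y ^ (-p) ≤
      Real.exp (b * A) * (b * A) ^ (-A) * y ^ (-b) * L ^ A := by
    have e1 : y ^ (-p) = y ^ (-b) * Real.exp (b * A) := by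
      have hpe : (-p : ℝ) = -b + b * A / L := by rw [hp]; ring
      rw [hpe, Real.rpow_add hy0]
      congr 1
      rw [Real.rpow_def_of_pos hy0, ← hL, mul_comm, div_mul_cancel₀ _ (ne_of_gt hL0)]
    have e2 : (b - p) ^ (-A / b * p) ≤ (b - p) ^ (-A) := by
      apply Real.rpow_le_rpow_of_exponent_ge hbp0 hbp1
      rw [neg_div, neg_mul, neg_le_neg_iff, div_mul_eq_mul_div, div_le_iff₀ hb0]
      nlinarith [hpb, hA0, hp0]
    have e3 : (b - p) ^ (-A : ℝ) = (b * A) ^ (-A) * L ^ A := by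
      rw [hbp, Real.div_rpow hbA0.le hL0.le,
        show L ^ (-A : ℝ) = (L ^ A)⁻¹ from Real.rpow_neg hL0.le A, div_eq_mul_inv, inv_inv]
    calc (b - p) ^ (-A / b * p) * y ^ (-p)
        ≤ (b - p) ^ (-A : ℝ) * y ^ (-p) :=
          mul_le_mul_of_nonneg_right e2 (Real.rpow_pos_of_pos hy0 _).le
      _ = (b * A) ^ (-A) * L ^ A * (y ^ (-b) * Real.exp (b * A)) := by rw [e3, e1]
      _ = Real.exp (b * A) * (b * A) ^ (-A) * y ^ (-b) * L ^ A := by ring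
  have hsub1 : {ω | y ≤ f ω} ⊆ {ω | y ^ p ≤ |f ω| ^ p} := by
    intro ω hω
    simp only [Set.mem_setOf_eq] at *
    exact Real.rpow_le_rpow hy0.le (le_trans hω (le_abs_self _)) hp0.le
  have hsub2 : {ω | f ω ≤ -y} ⊆ {ω | y ^ p ≤ |f ω| ^ p} := by
    intro ω hω
    simp only [Set.mem_setOf_eq] at *
    exact Real.rpow_le_rpow hy0.le (le_trans (by linarith) (neg_le_abs _)) hp0.le
  exact max_le ((markov _ hsub1).trans key) ((markov _ hsub2).trans key)
end
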